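/- arXiv:0904.1475 — 6 statements merged into one kernel-verified Lean document; each statement's English description precedes it below -/
import Mathlib

section
/- Let α be a unit-speed curve in ℝ³ with κ > 0, and suppose the normal surface r(s,v) = α(s) + v·n(s) is a constant angle surface, i.e., the unit normal N = ((1-κv)b - τv t)/√((1-κv)² + τ²v²) satisfies ⟨N, k⟩ = cos θ for all (s,v) with a fixed unit vector k and constant θ. Then for every s: ⟨b(s), k⟩² = cos²θ, κ⟨b,k⟩² + τ⟨b,k⟩⟨t,k⟩ = κ cos²θ, and (κ⟨b,k⟩ + τ⟨t,k⟩)² = (κ² + τ²) cos²θ. -/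
open scoped RealInnerProductSpace
open Real

noncomputable section

abbrev E3 := EuclideanSpace ℝ (Fin 3)

/-- Cross product on `EuclideanSpace ℝ (Fin 3)`. -/
def cross3 (a b : E3) : E3 :=
  (EuclideanSpace.equiv (Fin 3) ℝ).symm
    ![a 1 * b 2 - a 2 * b 1, a 2 * b 0 - a 0 * b 2, a 0 * b 1 - a 1 * b 0]

/-- if the unit normal
`N = ((1-κv) b - τv t)/√((1-κv)² + τ²v²)` of the normal surface makes the constant
angle `θ` with a fixed unit vector `k`, then the three coefficient equations hold. -/
theorem normal_surface_constant_angle_coefficient_equations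
    (α : ℝ → E3) (hα : ContDiff ℝ (⊤ : ℕ∞) α)
    (hunit : ∀ s, ‖deriv α s‖ = 1)
    (t n b : ℝ → E3) (κ τ : ℝ → ℝ)
    (ht : ∀ s, t s = deriv α s)
    (hκ : ∀ s, κ s = ‖deriv (deriv α) s‖) (hκpos : ∀ s, 0 < κ s)
    (hn : ∀ s, n s = (κ s)⁻¹ • deriv (deriv α) s)
    (hb : ∀ s, b s = cross3 (t s) (n s))
    (hfr1 : ∀ s, deriv t s = κ s • n s)
    (hfr2 : ∀ s, deriv n s = -(κ s) • t s + τ s • b s)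
    (hfr3 : ∀ s, deriv b s = -(τ s) • n s)
    (k : E3) (hk : ‖k‖ = 1) (θ : ℝ)
    (hconst : ∀ s v : ℝ, (1 - κ s * v) ^ 2 + (τ s) ^ 2 * v ^ 2 ≠ 0 →
      ⟪(Real.sqrt ((1 - κ s * v) ^ 2 + (τ s) ^ 2 * v ^ 2))⁻¹ •
          ((1 - κ s * v) • b s - (τ s * v) • t s), k⟫ = Real.cos θ) :
    ∀ s : ℝ,
      ⟪b s, k⟫ ^ 2 = Real.cos θ ^ 2 ∧
      κ s * ⟪b s, k⟫ ^ 2 + τ s * ⟪b s, k⟫ * ⟪t s, k⟫ = κ s * Real.cos θ ^ 2 ∧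
      (κ s * ⟪b s, k⟫ + τ s * ⟪t s, k⟫) ^ 2
        = ((κ s) ^ 2 + (τ s) ^ 2) * Real.cos θ ^ 2 := by

  intro s
  set B := ⟪b s, k⟫ with hB
  set T := ⟪t s, k⟫ with hT
  set c := Real.cos θ with hc
  have key : ∀ v : ℝ, (1 - κ s * v) ^ 2 + (τ s) ^ 2 * v ^ 2 ≠ 0 →
      ((1 - κ s * v) * B - (τ s * v) * T) ^ 2
        = c ^ 2 * ((1 - κ s * v) ^ 2 + (τ s) ^ 2 * v ^ 2) := by
    intro v hD
    have hD0 : 0 ≤ (1 - κ s * v) ^ 2 + (τ s) ^ 2 * v ^ 2 := by positivity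
    have hDpos : 0 < (1 - κ s * v) ^ 2 + (τ s) ^ 2 * v ^ 2 := lt_of_le_of_ne hD0 (Ne.symm hD)
    have hsq : Real.sqrt ((1 - κ s * v) ^ 2 + (τ s) ^ 2 * v ^ 2) > 0 := Real.sqrt_pos.mpr hDpos
    have h := hconst s v hD
    rw [real_inner_smul_left, inner_sub_left, real_inner_smul_left, real_inner_smul_left] at h
    rw [inv_mul_eq_iff_eq_mul₀ hsq.ne'] at h
    have h2 : (1 - κ s * v) * B - (τ s * v) * T
        = c * Real.sqrt ((1 - κ s * v) ^ 2 + (τ s) ^ 2 * v ^ 2) := by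
      rw [h]; ring
    calc ((1 - κ s * v) * B - (τ s * v) * T) ^ 2
        = c ^ 2 * (Real.sqrt ((1 - κ s * v) ^ 2 + (τ s) ^ 2 * v ^ 2)) ^ 2 := by
          rw [h2]; ring
      _ = c ^ 2 * ((1 - κ s * v) ^ 2 + (τ s) ^ 2 * v ^ 2) := by
          rw [Real.sq_sqrt hD0]
  have hκ0 := hκpos s
  have h0 : ((1 - κ s * 0) ^ 2 + (τ s) ^ 2 * 0 ^ 2 : ℝ) ≠ 0 := by norm_num
  have h1 : ((1 - κ s * (-1)) ^ 2 + (τ s) ^ 2 * (-1) ^ 2 : ℝ) ≠ 0 := by nlinarith [hκ0, sq_nonneg (τ s), sq_nonneg (κ s)]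
  have h2 : ((1 - κ s * (-2)) ^ 2 + (τ s) ^ 2 * (-2) ^ 2 : ℝ) ≠ 0 := by nlinarith [hκ0, sq_nonneg (τ s), sq_nonneg (κ s)]
  have e0 := key 0 h0
  have e1 := key (-1) h1
  have e2 := key (-2) h2
  refine ⟨by linear_combination e0, by linear_combination e1 - (1/4) * e2 - (3/4) * e0,
    by linear_combination (1/2) * e2 - e1 + (1/2) * e0⟩
end
end

section
/- Let α be a unit-speed curve in ℝ³ with κ > 0 whose normal surface r(s,v) = α(s) + v·n(s) has unit normal making a constant angle with a fixed unit direction k. Then the torsion τ of α vanishes identically; i.e., α is a planar curve and the normal surface is contained in the plane of α. -/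
open scoped RealInnerProductSpace
open Real

noncomputable section

lemma cross3_apply0 (a c : E3) : cross3 a c 0 = a 1 * c 2 - a 2 * c 1 := rfl
lemma cross3_apply1 (a c : E3) : cross3 a c 1 = a 2 * c 0 - a 0 * c 2 := rfl
lemma cross3_apply2 (a c : E3) : cross3 a c 2 = a 0 * c 1 - a 1 * c 0 := rfl

lemma inner_cross3_left (a c : E3) : ⟪a, cross3 a c⟫ = 0 := by
  simp only [PiLp.inner_apply, Fin.sum_univ_three, RCLike.inner_apply, conj_trivial,
    cross3_apply0, cross3_apply1, cross3_apply2]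
  ring

lemma inner_cross3_right (a c : E3) : ⟪c, cross3 a c⟫ = 0 := by
  simp only [PiLp.inner_apply, Fin.sum_univ_three, RCLike.inner_apply, conj_trivial,
    cross3_apply0, cross3_apply1, cross3_apply2]
  ring

lemma gram3 (t n k : E3) (htt : ⟪t,t⟫ = 1) (hnn : ⟪n,n⟫ = 1) (htn : ⟪t,n⟫ = 0)
    (hkt : ⟪t,k⟫ = 0) (hkn : ⟪n,k⟫ = 0) (hkb : ⟪cross3 t n, k⟫ = 0) (hkk : ⟪k,k⟫ = 1) :
    False := by
  simp only [PiLp.inner_apply, Fin.sum_univ_three, RCLike.inner_apply, conj_trivial,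
    cross3_apply0, cross3_apply1, cross3_apply2] at *
  set t0 := t 0; set t1 := t 1; set t2 := t 2
  set n0 := n 0; set n1 := n 1; set n2 := n 2
  set k0 := k 0; set k1 := k 1; set k2 := k 2
  have key : k0*k0 + k1*k1 + k2*k2 = 0 := by
    linear_combination (-(k0*k0+k1*k1+k2*k2)*(n0*n0+n1*n1+n2*n2)) * htt
      + (-(k0*k0+k1*k1+k2*k2)) * hnn
      + ((k0*k0+k1*k1+k2*k2)*(t0*n0+t1*n1+t2*n2)) * htn
      + ((n0*n0+n1*n1+n2*n2)*(t0*k0+t1*k1+t2*k2) - 2*(t0*n0+t1*n1+t2*n2)*(n0*k0+n1*k1+n2*k2)) * hkt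
      + ((t0*t0+t1*t1+t2*t2)*(n0*k0+n1*k1+n2*k2)) * hkn
      + ((t1*n2-t2*n1)*k0 + (t2*n0-t0*n2)*k1 + (t0*n1-t1*n0)*k2) * hkb
  rw [hkk] at key; norm_num at key

lemma coord_cd (f : ℝ → E3) (hf : ContDiff ℝ (↑(⊤:ℕ∞)) f) (i : Fin 3) :
    ContDiff ℝ (↑(⊤:ℕ∞)) (fun s => f s i) := by
  exact ContDiff.comp (EuclideanSpace.proj i).contDiff hf

lemma cross_cd (f g : ℝ → E3) (hf : ContDiff ℝ (↑(⊤:ℕ∞)) f) (hg : ContDiff ℝ (↑(⊤:ℕ∞)) g) :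
    ContDiff ℝ (↑(⊤:ℕ∞)) (fun s => cross3 (f s) (g s)) := by
  have h : ContDiff ℝ (↑(⊤:ℕ∞)) (fun s => (fun i => cross3 (f s) (g s) i : Fin 3 → ℝ)) := by
    apply contDiff_pi.mpr
    intro i
    fin_cases i <;>
      simpa [cross3] using by
        first
        | exact ((coord_cd f hf 1).mul (coord_cd g hg 2)).sub ((coord_cd f hf 2).mul (coord_cd g hg 1))
        | exact ((coord_cd f hf 2).mul (coord_cd g hg 0)).sub ((coord_cd f hf 0).mul (coord_cd g hg 2))
        | exact ((coord_cd f hf 0).mul (coord_cd g hg 1)).sub ((coord_cd f hf 1).mul (coord_cd g hg 0))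
  exact ContDiff.comp (EuclideanSpace.equiv (Fin 3) ℝ).symm.contDiff h

/-- if the normal surface `r(s,v) = α(s) + v n(s)` of a unit-speed curve
with `κ > 0` has unit normal making a constant angle with a fixed unit direction `k`,
then the torsion vanishes identically, the binormal is constant, and the surface lies
in the plane of the (planar) curve `α`. -/
theorem normal_constant_angle_surface_is_planar
    (α : ℝ → E3) (hα : ContDiff ℝ (⊤ : ℕ∞) α)
    (hunit : ∀ s, ‖deriv α s‖ = 1)
    (t n b : ℝ → E3) (κ τ : ℝ → ℝ)
    (ht : ∀ s, t s = deriv α s)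
    (hκ : ∀ s, κ s = ‖deriv (deriv α) s‖) (hκpos : ∀ s, 0 < κ s)
    (hn : ∀ s, n s = (κ s)⁻¹ • deriv (deriv α) s)
    (hb : ∀ s, b s = cross3 (t s) (n s))
    (hfr1 : ∀ s, deriv t s = κ s • n s)
    (hfr2 : ∀ s, deriv n s = -(κ s) • t s + τ s • b s)
    (hfr3 : ∀ s, deriv b s = -(τ s) • n s)
    (k : E3) (hk : ‖k‖ = 1) (θ : ℝ)
    (hconst : ∀ s v : ℝ, (1 - κ s * v) ^ 2 + (τ s) ^ 2 * v ^ 2 ≠ 0 →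
      ⟪(Real.sqrt ((1 - κ s * v) ^ 2 + (τ s) ^ 2 * v ^ 2))⁻¹ •
          ((1 - κ s * v) • b s - (τ s * v) • t s), k⟫ = Real.cos θ) :
    (∀ s, τ s = 0) ∧ (∀ s, b s = b 0) ∧
      (∀ s v : ℝ, ⟪α s + v • n s - α 0, b 0⟫ = 0) := by
  -- smoothness
  have hα' : ContDiff ℝ (↑(⊤:ℕ∞)) α := hα.of_le (by simp)
  have ht_cd : ContDiff ℝ (↑(⊤:ℕ∞)) (deriv α) := (contDiff_infty_iff_deriv.mp hα').2
  have hd2_cd : ContDiff ℝ (↑(⊤:ℕ∞)) (deriv (deriv α)) := (contDiff_infty_iff_deriv.mp ht_cd).2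
  have hκne : ∀ s, κ s ≠ 0 := fun s => ne_of_gt (hκpos s)
  have hd2ne : ∀ s, deriv (deriv α) s ≠ 0 := fun s => by
    have := hκpos s; rw [hκ s] at this; exact norm_pos_iff.mp this
  have htfun : t = deriv α := funext ht
  have hnfun : n = fun s => ‖deriv (deriv α) s‖⁻¹ • deriv (deriv α) s := by
    funext s; rw [hn s, hκ s]
  have hn_cd : ContDiff ℝ (↑(⊤:ℕ∞)) n := by
    rw [hnfun]
    exact ((hd2_cd.norm ℝ hd2ne).inv (fun x => norm_ne_zero_iff.mpr (hd2ne x))).smul hd2_cd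
  have hb_cd : ContDiff ℝ (↑(⊤:ℕ∞)) b := by
    have : ContDiff ℝ (↑(⊤:ℕ∞)) (fun s => cross3 (t s) (n s)) :=
      cross_cd t n (htfun ▸ ht_cd) hn_cd
    exact (funext hb : b = _) ▸ this
  have hone : (1 : WithTop ℕ∞) ≤ ↑(⊤:ℕ∞) := by exact_mod_cast le_top
  have hαd : Differentiable ℝ α := hα'.differentiable (zero_lt_one.trans_le hone).ne'
  have htd : Differentiable ℝ t := htfun ▸ ht_cd.differentiable (zero_lt_one.trans_le hone).ne'
  have hnd : Differentiable ℝ n := hn_cd.differentiable (zero_lt_one.trans_le hone).ne'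
  have hbd : Differentiable ℝ b := hb_cd.differentiable (zero_lt_one.trans_le hone).ne'
  -- basic orthonormality
  have htt : ∀ s, ⟪t s, t s⟫ = 1 := by
    intro s
    rw [ht s, real_inner_self_eq_norm_sq, hunit s]; norm_num
  have hnn : ∀ s, ⟪n s, n s⟫ = 1 := by
    intro s
    rw [hn s, real_inner_smul_left, real_inner_smul_right, real_inner_self_eq_norm_sq, ← hκ s]
    field_simp [hκne s]
  have hd1 : Differentiable ℝ (deriv α) := ht_cd.differentiable (zero_lt_one.trans_le hone).ne'
  have htn : ∀ s, ⟪t s, n s⟫ = 0 := by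
    intro s
    have h1 : HasDerivAt (fun s => ⟪deriv α s, deriv α s⟫)
        (⟪deriv α s, deriv (deriv α) s⟫ + ⟪deriv (deriv α) s, deriv α s⟫) s :=
      HasDerivAt.inner ℝ (hd1 s).hasDerivAt (hd1 s).hasDerivAt
    have h2 : (fun s => ⟪deriv α s, deriv α s⟫) = fun _ => (1:ℝ) := by
      funext u; rw [real_inner_self_eq_norm_sq, hunit u]; norm_num
    rw [h2] at h1
    have h3 := h1.unique (hasDerivAt_const s 1)
    have h4 : ⟪deriv α s, deriv (deriv α) s⟫ = 0 := by
      have hcomm := real_inner_comm (deriv (deriv α) s) (deriv α s)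
      linarith
    rw [ht s, hn s, real_inner_smul_right, h4, mul_zero]
  have htb : ∀ s, ⟪t s, b s⟫ = 0 := fun s => by rw [hb s]; exact inner_cross3_left _ _
  have hnb : ∀ s, ⟪n s, b s⟫ = 0 := fun s => by rw [hb s]; exact inner_cross3_right _ _
  -- step 0: inner b k = cos θ for all s
  have hbk : ∀ s, ⟪b s, k⟫ = Real.cos θ := by
    intro s
    have h := hconst s 0 (by norm_num)
    simpa using h
  -- step 1: τ = 0
  have htau : ∀ s, τ s = 0 := by
    intro s₀
    by_contra hτ
    set a := (⟪t s₀, k⟫ : ℝ) with ha_def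
    set c := Real.cos θ with hc_def
    have hDpos : ∀ v : ℝ, 0 < (1 - κ s₀ * v) ^ 2 + (τ s₀) ^ 2 * v ^ 2 := by
      intro v
      rcases eq_or_ne v 0 with rfl | hv
      · norm_num
      · have h1 : 0 < (τ s₀) ^ 2 * v ^ 2 := by positivity
        nlinarith [sq_nonneg (1 - κ s₀ * v)]
    have key : ∀ v : ℝ, ((1 - κ s₀ * v) * c - τ s₀ * v * a) ^ 2 =
        ((1 - κ s₀ * v) ^ 2 + (τ s₀) ^ 2 * v ^ 2) * c ^ 2 := by
      intro v
      have hD := hDpos v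
      have h := hconst s₀ v (ne_of_gt hD)
      rw [real_inner_smul_left, inner_sub_left, real_inner_smul_left, real_inner_smul_left,
        hbk s₀] at h
      have hs : 0 < Real.sqrt ((1 - κ s₀ * v) ^ 2 + (τ s₀) ^ 2 * v ^ 2) := Real.sqrt_pos.mpr hD
      rw [inv_mul_eq_iff_eq_mul₀ (ne_of_gt hs)] at h
      rw [ha_def, h, mul_pow, Real.sq_sqrt hD.le]
    have e1 := key 1
    have e2 := key 2
    have h3 : τ s₀ * (a * c) = 0 := by linear_combination (-1 : ℝ) * e1 + (1/4 : ℝ) * e2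
    have hac : a * c = 0 := (mul_eq_zero.mp h3).resolve_left hτ
    have h4 : τ s₀ ^ 2 * a ^ 2 = τ s₀ ^ 2 * c ^ 2 := by
      linear_combination e1 + (2 * (1 - κ s₀) * τ s₀) * hac
    have ha2 : a ^ 2 = c ^ 2 := mul_left_cancel₀ (pow_ne_zero 2 hτ) h4
    have hc4 : c ^ 4 = 0 := by linear_combination (-c^2 : ℝ) * ha2 + (a*c) * hac
    have hc0 : c = 0 := by
      have := pow_eq_zero_iff (n := 4) (by norm_num) |>.mp hc4
      exact this
    have ha4 : a ^ 4 = 0 := by linear_combination (a^2 : ℝ) * ha2 + (a*c) * hac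
    have ha0 : a = 0 := pow_eq_zero_iff (n := 4) (by norm_num) |>.mp ha4
    -- now inner b k = 0 everywhere; differentiate to get inner n k = 0 at s₀
    have hbk0 : ∀ s, ⟪b s, k⟫ = 0 := fun s => by rw [hbk s, hc0]
    have h1 : HasDerivAt (fun s => ⟪b s, k⟫) (⟪b s₀, (0:E3)⟫ + ⟪deriv b s₀, k⟫) s₀ :=
      HasDerivAt.inner ℝ (hbd s₀).hasDerivAt (hasDerivAt_const s₀ k)
    rw [inner_zero_right, zero_add] at h1
    have h2 : (fun s => ⟪b s, k⟫) = fun _ => (0:ℝ) := funext hbk0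
    rw [h2] at h1
    have h5 := h1.unique (hasDerivAt_const s₀ 0)
    rw [hfr3 s₀, real_inner_smul_left] at h5
    have hnk : ⟪n s₀, k⟫ = 0 := by
      rcases mul_eq_zero.mp h5 with h | h
      · exact absurd (neg_eq_zero.mp h) hτ
      · exact h
    have hkk : ⟪k, k⟫ = 1 := by rw [real_inner_self_eq_norm_sq, hk]; norm_num
    have hbkcross : ⟪cross3 (t s₀) (n s₀), k⟫ = 0 := by rw [← hb s₀]; exact hbk0 s₀
    exact gram3 (t s₀) (n s₀) k (htt s₀) (hnn s₀) (htn s₀) (ha_def ▸ ha0) hnk hbkcross hkk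
  -- step 2: b constant
  have hbconst : ∀ s, b s = b 0 := by
    intro s
    exact is_const_of_deriv_eq_zero hbd (fun u => by rw [hfr3 u, htau u]; simp) s 0
  refine ⟨htau, hbconst, ?_⟩
  -- step 3: plane
  intro s v
  have hg : ∀ u : ℝ, HasDerivAt (fun s => ⟪α s + v • n s - α 0, b 0⟫) 0 u := by
    intro u
    have hd : HasDerivAt (fun s => α s + v • n s - α 0) (deriv α u + v • deriv n u) u :=
      (((hαd u).hasDerivAt).add ((hnd u).hasDerivAt.const_smul v)).sub_const _
    have h1 : HasDerivAt (fun s => ⟪α s + v • n s - α 0, b 0⟫)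
        (⟪α u + v • n u - α 0, (0:E3)⟫ + ⟪deriv α u + v • deriv n u, b 0⟫) u :=
      HasDerivAt.inner ℝ hd (hasDerivAt_const u (b 0))
    rw [inner_zero_right, zero_add] at h1
    have hderivn : deriv n u = -(κ u) • t u := by rw [hfr2 u, htau u]; simp
    have h2 : ⟪deriv α u + v • deriv n u, b 0⟫ = 0 := by
      rw [← hbconst u, ← ht u, hderivn, inner_add_left, real_inner_smul_left,
        real_inner_smul_left, htb u]
      ring
    rwa [h2] at h1
  have hconstfn : ∀ u : ℝ, ⟪α u + v • n u - α 0, b 0⟫ = ⟪α 0 + v • n 0 - α 0, b 0⟫ := by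
    intro u
    exact is_const_of_deriv_eq_zero (fun x => (hg x).differentiableAt)
      (fun x => (hg x).deriv) u 0
  rw [hconstfn s]
  have h0 : α 0 + v • n 0 - α 0 = v • n 0 := by abel
  rw [h0, real_inner_smul_left, hnb 0, mul_zero]
end
end

section
/- Let α be a unit-speed curve in ℝ³ with κ > 0 whose binormal surface r(s,v) = α(s) + v·b(s) has unit normal N = (-n - τv·t)/√(1 + τ²v²) making a constant angle θ with a fixed unit vector k. Then τ ≡ 0, ⟨t, k⟩ ≡ 0, θ = π/2, and b is parallel to k; hence the surface is a cylinder over the plane curve α with rulings parallel to k. -/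
open scoped RealInnerProductSpace
open Real

noncomputable section

lemma inner3 (x y : E3) : ⟪x, y⟫ = x 0 * y 0 + x 1 * y 1 + x 2 * y 2 := by
  simp [PiLp.inner_apply, Fin.sum_univ_three, RCLike.inner_apply, mul_comm]

lemma gram_scalar (t0 t1 t2 n0 n1 n2 k0 k1 k2 : ℝ)
    (e1 : t0*t0+t1*t1+t2*t2 = 1) (e2 : n0*n0+n1*n1+n2*n2 = 1)
    (e3 : t0*n0+t1*n1+t2*n2 = 0)
    (e4 : t0*k0+t1*k1+t2*k2 = 0) (e5 : n0*k0+n1*k1+n2*k2 = 0)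
    (e6 : k0*k0+k1*k1+k2*k2 = 1) :
    ((t1*n2-t2*n1)*k0 + (t2*n0-t0*n2)*k1 + (t0*n1-t1*n0)*k2)^2 = 1 := by
  linear_combination ((n0*n0+n1*n1+n2*n2)*(k0*k0+k1*k1+k2*k2)) * e1
    + (k0*k0+k1*k1+k2*k2) * e2 + e6
    + (2*(n0*k0+n1*k1+n2*k2)*(t0*k0+t1*k1+t2*k2)
        - (k0*k0+k1*k1+k2*k2)*(t0*n0+t1*n1+t2*n2)) * e3
    + (-(n0*n0+n1*n1+n2*n2)*(t0*k0+t1*k1+t2*k2)) * e4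
    + (-(t0*t0+t1*t1+t2*t2)*(n0*k0+n1*k1+n2*k2)) * e5

lemma lagrange_scalar (t0 t1 t2 n0 n1 n2 : ℝ)
    (e1 : t0*t0+t1*t1+t2*t2 = 1) (e2 : n0*n0+n1*n1+n2*n2 = 1)
    (e3 : t0*n0+t1*n1+t2*n2 = 0) :
    (t1*n2-t2*n1)*(t1*n2-t2*n1) + (t2*n0-t0*n2)*(t2*n0-t0*n2)
      + (t0*n1-t1*n0)*(t0*n1-t1*n0) = 1 := by
  linear_combination (n0*n0+n1*n1+n2*n2) * e1 + e2 + (-(t0*n0+t1*n1+t2*n2)) * e3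

/-- if the binormal surface `r(s,v) = α(s) + v b(s)` of a unit-speed
curve with `κ > 0` has unit normal `N = (-n - τv t)/√(1 + τ²v²)` making a constant
angle `θ` with a fixed unit vector `k`, then `τ ≡ 0`, `⟪t, k⟫ ≡ 0`, `θ = π/2`,
and the binormal is parallel to `k`. -/
theorem binormal_constant_angle_surface_is_cylinder
    (α : ℝ → E3) (hα : ContDiff ℝ (⊤ : ℕ∞) α)
    (hunit : ∀ s, ‖deriv α s‖ = 1)
    (t n b : ℝ → E3) (κ τ : ℝ → ℝ)
    (ht : ∀ s, t s = deriv α s)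
    (hκ : ∀ s, κ s = ‖deriv (deriv α) s‖) (hκpos : ∀ s, 0 < κ s)
    (hn : ∀ s, n s = (κ s)⁻¹ • deriv (deriv α) s)
    (hb : ∀ s, b s = cross3 (t s) (n s))
    (hfr1 : ∀ s, deriv t s = κ s • n s)
    (hfr2 : ∀ s, deriv n s = -(κ s) • t s + τ s • b s)
    (hfr3 : ∀ s, deriv b s = -(τ s) • n s)
    (k : E3) (hk : ‖k‖ = 1) (θ : ℝ) (hθ : θ ∈ Set.Ico 0 π)
    (hconst : ∀ s v : ℝ,
      ⟪(Real.sqrt (1 + (τ s) ^ 2 * v ^ 2))⁻¹ • (-n s - (τ s * v) • t s), k⟫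
        = Real.cos θ) :
    (∀ s, τ s = 0) ∧ (∀ s, ⟪t s, k⟫ = 0) ∧ θ = π / 2 ∧
      (∀ s, b s = k ∨ b s = -k) := by
  -- smoothness of derivatives
  have hdα : ContDiff ℝ (⊤ : ℕ∞) (deriv α) := (contDiff_infty_iff_deriv.mp (hα.of_le (by simp))).2
  have hddα : ContDiff ℝ (⊤ : ℕ∞) (deriv (deriv α)) := (contDiff_infty_iff_deriv.mp hdα).2
  have ht_diff : Differentiable ℝ t := by
    have : t = deriv α := funext ht
    rw [this]; exact hdα.differentiable (by simp)
  -- n is differentiable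
  have hdd_ne : ∀ s, deriv (deriv α) s ≠ 0 := by
    intro s h
    have := hκpos s
    rw [hκ s, h, norm_zero] at this
    exact lt_irrefl _ this
  have hκdiff : ∀ s, DifferentiableAt ℝ κ s := by
    intro s
    have hf : κ = fun s => ‖deriv (deriv α) s‖ := funext hκ
    rw [hf]
    exact ((hddα.contDiffAt.of_le (m := 1) (by exact_mod_cast le_top)).norm ℝ (hdd_ne s)).differentiableAt one_ne_zero
  have hn_diff : ∀ s, DifferentiableAt ℝ n s := by
    intro s
    have hf : n = fun s => (κ s)⁻¹ • deriv (deriv α) s := funext hn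
    rw [hf]
    exact ((hκdiff s).inv (hκpos s).ne').smul (hddα.differentiable (by simp)).differentiableAt
  -- orthonormality
  have htt : ∀ s, ⟪t s, t s⟫ = 1 := by
    intro s
    rw [real_inner_self_eq_norm_sq, ht s, hunit s, one_pow]
  have hnn : ∀ s, ⟪n s, n s⟫ = 1 := by
    intro s
    rw [real_inner_self_eq_norm_sq, hn s, norm_smul, norm_inv, Real.norm_eq_abs,
      abs_of_pos (hκpos s), ← hκ s, inv_mul_cancel₀ (hκpos s).ne']
    norm_num
  have htn : ∀ s, ⟪t s, n s⟫ = 0 := by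
    intro s
    have hc : (fun s => ⟪t s, t s⟫) = fun _ => (1:ℝ) := funext htt
    have hd : HasDerivAt (fun s => ⟪t s, t s⟫) (⟪t s, deriv t s⟫ + ⟪deriv t s, t s⟫) s :=
      (ht_diff s).hasDerivAt.inner ℝ (ht_diff s).hasDerivAt
    have h0 : deriv (fun s => ⟪t s, t s⟫) s = 0 := by rw [hc]; simp
    have := hd.deriv
    rw [h0, hfr1 s, real_inner_smul_left, real_inner_smul_right, real_inner_comm (n s) (t s)] at this
    have h2 : κ s * ⟪n s, t s⟫ = 0 := by linarith
    have h3 : ⟪n s, t s⟫ = 0 := (mul_eq_zero.mp h2).resolve_left (hκpos s).ne'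
    rw [real_inner_comm]; exact h3
  -- inner products with k
  have h0 : ∀ s, ⟪n s, k⟫ = -Real.cos θ := by
    intro s
    have e := hconst s 0
    rw [show (1:ℝ) + τ s ^ 2 * 0 ^ 2 = 1 by ring, Real.sqrt_one, inv_one, one_smul,
      mul_zero, zero_smul, sub_zero, inner_neg_left] at e
    linarith
  have gen : ∀ s v : ℝ, Real.cos θ - τ s * v * ⟪t s, k⟫
      = Real.sqrt (1 + τ s ^ 2 * v ^ 2) * Real.cos θ := by
    intro s v
    have e := hconst s v
    rw [real_inner_smul_left, inner_sub_left, inner_neg_left, real_inner_smul_left, h0 s] at e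
    have hqpos : (0:ℝ) < Real.sqrt (1 + τ s ^ 2 * v ^ 2) := Real.sqrt_pos.mpr (by positivity)
    rw [inv_mul_eq_iff_eq_mul₀ hqpos.ne'] at e
    linarith [e]
  have keyT : ∀ s, τ s * ⟪t s, k⟫ = 0 := by
    intro s
    have e1 := gen s 1
    have e2 := gen s (-1)
    rw [show (1:ℝ) + τ s ^ 2 * (-1:ℝ) ^ 2 = 1 + τ s ^ 2 * (1:ℝ) ^ 2 by ring] at e2
    nlinarith [e1, e2]
  have keyC : ∀ s, Real.cos θ * (Real.sqrt (1 + τ s ^ 2) - 1) = 0 := by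
    intro s
    have e1 := gen s 1
    have e2 := gen s (-1)
    rw [show (1:ℝ) + τ s ^ 2 * (-1:ℝ) ^ 2 = 1 + τ s ^ 2 * (1:ℝ) ^ 2 by ring] at e2
    rw [show (1:ℝ) + τ s ^ 2 * (1:ℝ) ^ 2 = 1 + τ s ^ 2 by ring] at e1 e2
    nlinarith [e1, e2]
  have hτ_of_ne : ∀ s, Real.cos θ ≠ 0 → τ s = 0 := by
    intro s hc
    have h1 := keyC s
    have h2 : Real.sqrt (1 + τ s ^ 2) = 1 := by
      rcases mul_eq_zero.mp h1 with h | h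
      · exact absurd h hc
      · linarith
    have h3 : 1 + τ s ^ 2 = 1 := by
      rw [Real.sqrt_eq_one] at h2; exact h2
    have : τ s ^ 2 = 0 := by linarith
    exact pow_eq_zero_iff (by norm_num) |>.mp this
  -- derivative of ⟪n s, k⟫ is zero:  -κ ⟪t,k⟫ + τ ⟪b,k⟫ = 0
  have hderivNk : ∀ s, -(κ s) * ⟪t s, k⟫ + τ s * ⟪b s, k⟫ = 0 := by
    intro s
    have hc : (fun s => ⟪n s, k⟫) = fun _ => -Real.cos θ := funext h0
    have hd : HasDerivAt (fun s => ⟪n s, k⟫) (⟪deriv n s, k⟫) s := by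
      have := (hn_diff s).hasDerivAt.inner ℝ (hasDerivAt_const s k)
      simpa using this
    have hz : deriv (fun s => ⟪n s, k⟫) s = 0 := by rw [hc]; simp
    have := hd.deriv
    rw [hz, hfr2 s, inner_add_left, real_inner_smul_left, real_inner_smul_left] at this
    linarith
  -- derivative of ⟪t s, k⟫  equals κ ⟪n, k⟫
  have hderivT : ∀ s, deriv (fun s => ⟪t s, k⟫) s = κ s * ⟪n s, k⟫ := by
    intro s
    have hd : HasDerivAt (fun s => ⟪t s, k⟫) (⟪deriv t s, k⟫) s := by
      have := (ht_diff s).hasDerivAt.inner ℝ (hasDerivAt_const s k)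
      simpa using this
    rw [hd.deriv, hfr1 s, real_inner_smul_left]
  -- cos θ = 0
  have hc0 : Real.cos θ = 0 := by
    by_contra hc
    have hτ0 : ∀ s, τ s = 0 := fun s => hτ_of_ne s hc
    have hT0 : ∀ s, ⟪t s, k⟫ = 0 := by
      intro s
      have := hderivNk s
      rw [hτ0 s, zero_mul, add_zero] at this
      have h2 : κ s * ⟪t s, k⟫ = 0 := by linarith
      exact (mul_eq_zero.mp h2).resolve_left (hκpos s).ne'
    have hTc : (fun s => ⟪t s, k⟫) = fun _ => (0:ℝ) := funext hT0
    have : κ 0 * ⟪n 0, k⟫ = 0 := by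
      rw [← hderivT 0, hTc]; simp
    have h3 : ⟪n 0, k⟫ = 0 := (mul_eq_zero.mp this).resolve_left (hκpos 0).ne'
    rw [h0 0] at h3
    exact hc (by linarith)
  -- all consequences
  have hNk0 : ∀ s, ⟪n s, k⟫ = 0 := by intro s; rw [h0 s, hc0, neg_zero]
  have hT0 : ∀ s, ⟪t s, k⟫ = 0 := by
    intro s
    rcases eq_or_ne (τ s) 0 with h | h
    · have := hderivNk s
      rw [h, zero_mul, add_zero] at this
      have h2 : κ s * ⟪t s, k⟫ = 0 := by linarith
      exact (mul_eq_zero.mp h2).resolve_left (hκpos s).ne'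
    · exact (mul_eq_zero.mp (keyT s)).resolve_left h
  -- Gram: ⟪b s, k⟫ ^ 2 = 1
  have hBsq : ∀ s, ⟪b s, k⟫ ^ 2 = 1 := by
    intro s
    have e1 := htt s; have e2 := hnn s; have e3 := htn s
    have e4 := hT0 s; have e5 := hNk0 s
    have e6 : ⟪k, k⟫ = 1 := by rw [real_inner_self_eq_norm_sq, hk, one_pow]
    rw [inner3] at e1 e2 e3 e4 e5 e6 ⊢
    rw [hb s]
    have c0 : cross3 (t s) (n s) 0 = t s 1 * n s 2 - t s 2 * n s 1 := rfl
    have c1 : cross3 (t s) (n s) 1 = t s 2 * n s 0 - t s 0 * n s 2 := rfl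
    have c2 : cross3 (t s) (n s) 2 = t s 0 * n s 1 - t s 1 * n s 0 := rfl
    rw [c0, c1, c2]
    exact gram_scalar _ _ _ _ _ _ _ _ _ e1 e2 e3 e4 e5 e6
  have hτ0 : ∀ s, τ s = 0 := by
    intro s
    have h1 := hderivNk s
    rw [hT0 s, mul_zero, zero_add] at h1
    rcases mul_eq_zero.mp h1 with h | h
    · exact h
    · exfalso; have h2 := hBsq s; rw [h] at h2; norm_num at h2
  have hθ2 : θ = π / 2 := by
    have : Real.cos θ = Real.cos (π / 2) := by rw [hc0, Real.cos_pi_div_two]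
    exact Real.injOn_cos ⟨hθ.1, hθ.2.le⟩ ⟨by positivity, by linarith [Real.pi_pos]⟩ this
  refine ⟨hτ0, hT0, hθ2, ?_⟩
  intro s
  have hbb : ⟪b s, b s⟫ = 1 := by
    have e1 := htt s; have e2 := hnn s; have e3 := htn s
    rw [inner3] at e1 e2 e3 ⊢
    rw [hb s]
    have c0 : cross3 (t s) (n s) 0 = t s 1 * n s 2 - t s 2 * n s 1 := rfl
    have c1 : cross3 (t s) (n s) 1 = t s 2 * n s 0 - t s 0 * n s 2 := rfl
    have c2 : cross3 (t s) (n s) 2 = t s 0 * n s 1 - t s 1 * n s 0 := rfl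
    rw [c0, c1, c2]
    exact lagrange_scalar _ _ _ _ _ _ e1 e2 e3
  have hnb : ‖b s‖ ^ 2 = 1 := by rw [← real_inner_self_eq_norm_sq, hbb]
  have hB1 : (⟪b s, k⟫ - 1) * (⟪b s, k⟫ + 1) = 0 := by
    have := hBsq s; linear_combination this
  rcases mul_eq_zero.mp hB1 with h | h
  · left
    have hB : ⟪b s, k⟫ = 1 := by linarith
    have : ‖b s - k‖ ^ 2 = 0 := by
      rw [norm_sub_sq_real, hnb, hB, hk]; norm_num
    have h2 : b s - k = 0 := by
      have := pow_eq_zero_iff (n := 2) (by norm_num) |>.mp this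
      exact norm_eq_zero.mp this
    exact sub_eq_zero.mp h2
  · right
    have hB : ⟪b s, k⟫ = -1 := by linarith
    have : ‖b s - -k‖ ^ 2 = 0 := by
      rw [norm_sub_sq_real, hnb, inner_neg_right, hB, norm_neg, hk]; norm_num
    have h2 : b s - -k = 0 := by
      have := pow_eq_zero_iff (n := 2) (by norm_num) |>.mp this
      exact norm_eq_zero.mp this
    exact sub_eq_zero.mp h2
end
end

section
/- Let α : ℝ → ℝ³ be a unit-speed spherical curve (|α| = 1) and k a fixed unit vector such that the cone r(s,v) = v·α(s) (v > 0) is a constant angle surface with respect to k, i.e., ⟨α(s) × α'(s), k⟩ is constant. Then either κ_g ≡ 0 (α is a great circle) or ⟨α'(s), k⟩ ≡ 0 on each connected component where κ_g ≠ 0; in either case α is a circle on the sphere, so the cone is a circular cone. -/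
open scoped RealInnerProductSpace
open Real

noncomputable section

private lemma key_alg (a0 a1 a2 b0 b1 b2 g0 g1 g2 k0 k1 k2 : ℝ)
    (Q1 : a0*a0+a1*a1+a2*a2 = 1) (Q2 : b0*b0+b1*b1+b2*b2 = 1)
    (Q3 : a0*b0+a1*b1+a2*b2 = 0) (Q4 : b0*g0+b1*g1+b2*g2 = 0)
    (Q5 : a0*g0+a1*g1+a2*g2 = -1) :
    (g0*(a1*b2-a2*b1)+g1*(a2*b0-a0*b2)+g2*(a0*b1-a1*b0)) * (b0*k0+b1*k1+b2*k2)
      + ((a1*g2-a2*g1)*k0+(a2*g0-a0*g2)*k1+(a0*g1-a1*g0)*k2) = 0 := by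
  linear_combination
      (-(b0*b0+b1*b1+b2*b2)*((a1*g2-a2*g1)*k0+(a2*g0-a0*g2)*k1+(a0*g1-a1*g0)*k2)
        - (g0*(a1*b2-a2*b1)+g1*(a2*b0-a0*b2)+g2*(a0*b1-a1*b0))*(b0*k0+b1*k1+b2*k2)) * Q1
    + (-((a1*g2-a2*g1)*k0+(a2*g0-a0*g2)*k1+(a0*g1-a1*g0)*k2)) * Q2
    + ((a0*b0+a1*b1+a2*b2)*((a1*g2-a2*g1)*k0+(a2*g0-a0*g2)*k1+(a0*g1-a1*g0)*k2)
        + ((a1*b2-a2*b1)*k0+(a2*b0-a0*b2)*k1+(a0*b1-a1*b0)*k2)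
        + (g0*(a1*b2-a2*b1)+g1*(a2*b0-a0*b2)+g2*(a0*b1-a1*b0))*(a0*k0+a1*k1+a2*k2)) * Q3
    + ((a0*a0+a1*a1+a2*a2)*((a1*b2-a2*b1)*k0+(a2*b0-a0*b2)*k1+(a0*b1-a1*b0)*k2)) * Q4
    + (-(a0*b0+a1*b1+a2*b2)*((a1*b2-a2*b1)*k0+(a2*b0-a0*b2)*k1+(a0*b1-a1*b0)*k2)) * Q5

/-- if the cone `r(s,v) = v α(s)` over a unit-speed spherical curve `α`
is a constant angle surface w.r.t. `k` (i.e. `⟪α × α', k⟫` is constant), then at every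
point either the geodesic curvature `κ_g` vanishes or `⟪α', k⟫ = 0`; and if `κ_g ≡ 0`
(great circle) or `κ_g` never vanishes, then `α` lies in an affine plane, i.e. it is a
circle on the sphere and the cone is a circular cone. -/
theorem conical_constant_angle_surface_is_circular_cone
    (α : ℝ → E3) (hα : ContDiff ℝ (⊤ : ℕ∞) α)
    (hsph : ∀ s, ‖α s‖ = 1) (hunit : ∀ s, ‖deriv α s‖ = 1)
    (κg : ℝ → ℝ)
    (hκg : ∀ s, κg s = ⟪deriv (deriv α) s, cross3 (α s) (deriv α s)⟫)
    (k : E3) (hk : ‖k‖ = 1)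
    (hconst : ∃ c : ℝ, ∀ s, ⟪cross3 (α s) (deriv α s), k⟫ = c) :
    (∀ s, κg s = 0 ∨ ⟪deriv α s, k⟫ = 0) ∧
    (((∀ s, κg s = 0) ∨ (∀ s, κg s ≠ 0)) →
      ∃ w : E3, ‖w‖ = 1 ∧ ∃ c : ℝ, ∀ s, ⟪α s, w⟫ = c) := by
  obtain ⟨c, hc⟩ := hconst
  have hα' : ContDiff ℝ (⊤ : ℕ∞) α := hα.of_le (by simp)
  have hd1 : Differentiable ℝ α := hα.differentiable (by simp)
  have hd2 : Differentiable ℝ (deriv α) :=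
    (contDiff_infty_iff_deriv.mp hα').2.differentiable (by simp)
  -- coordinate inner product
  have hinner : ∀ x y : E3, ⟪x, y⟫ = x 0 * y 0 + x 1 * y 1 + x 2 * y 2 := by
    intro x y
    simp [PiLp.inner_apply, Fin.sum_univ_three, RCLike.inner_apply, conj_trivial]
    ring
  have hcross0 : ∀ a b : E3, cross3 a b 0 = a 1 * b 2 - a 2 * b 1 := fun a b => rfl
  have hcross1 : ∀ a b : E3, cross3 a b 1 = a 2 * b 0 - a 0 * b 2 := fun a b => rfl
  have hcross2 : ∀ a b : E3, cross3 a b 2 = a 0 * b 1 - a 1 * b 0 := fun a b => rfl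
  -- coordinate derivatives
  have hA : ∀ (i : Fin 3) (s : ℝ), HasDerivAt (fun t => α t i) (deriv α s i) s := by
    intro i s
    exact (EuclideanSpace.proj (𝕜 := ℝ) i).hasFDerivAt.comp_hasDerivAt s (hd1 s).hasDerivAt
  have hB : ∀ (i : Fin 3) (s : ℝ),
      HasDerivAt (fun t => deriv α t i) (deriv (deriv α) s i) s := by
    intro i s
    exact (EuclideanSpace.proj (𝕜 := ℝ) i).hasFDerivAt.comp_hasDerivAt s (hd2 s).hasDerivAt
  -- derivative of a constant function is 0
  have const0 : ∀ (f : ℝ → ℝ) (cv d s : ℝ), (∀ t, f t = cv) → HasDerivAt f d s → d = 0 := by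
    intro f cv d s hfc hfd
    have hfe : f = fun _ => cv := funext hfc
    rw [hfe] at hfd
    exact hfd.unique (hasDerivAt_const s cv)
  -- pointwise scalar constraints
  have P1 : ∀ s, α s 0 * α s 0 + α s 1 * α s 1 + α s 2 * α s 2 = 1 := by
    intro s
    have h2 : ⟪α s, α s⟫ = 1 := by rw [real_inner_self_eq_norm_mul_norm, hsph s]; ring
    rw [hinner] at h2; exact h2
  have P2 : ∀ s, deriv α s 0 * deriv α s 0 + deriv α s 1 * deriv α s 1
      + deriv α s 2 * deriv α s 2 = 1 := by
    intro s
    have h2 : ⟪deriv α s, deriv α s⟫ = 1 := by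
      rw [real_inner_self_eq_norm_mul_norm, hunit s]; ring
    rw [hinner] at h2; exact h2
  have P3 : ∀ s, α s 0 * deriv α s 0 + α s 1 * deriv α s 1 + α s 2 * deriv α s 2 = 0 := by
    intro s
    have hD : HasDerivAt (fun t => α t 0 * α t 0 + α t 1 * α t 1 + α t 2 * α t 2)
        ((deriv α s 0 * α s 0 + α s 0 * deriv α s 0)
          + (deriv α s 1 * α s 1 + α s 1 * deriv α s 1)
          + (deriv α s 2 * α s 2 + α s 2 * deriv α s 2)) s :=
      (((hA 0 s).mul (hA 0 s)).add ((hA 1 s).mul (hA 1 s))).add ((hA 2 s).mul (hA 2 s))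
    have h0 := const0 _ 1 _ s P1 hD
    linear_combination h0 / 2
  have P4 : ∀ s, deriv α s 0 * deriv (deriv α) s 0 + deriv α s 1 * deriv (deriv α) s 1
      + deriv α s 2 * deriv (deriv α) s 2 = 0 := by
    intro s
    have hD : HasDerivAt (fun t => deriv α t 0 * deriv α t 0 + deriv α t 1 * deriv α t 1
        + deriv α t 2 * deriv α t 2)
        ((deriv (deriv α) s 0 * deriv α s 0 + deriv α s 0 * deriv (deriv α) s 0)
          + (deriv (deriv α) s 1 * deriv α s 1 + deriv α s 1 * deriv (deriv α) s 1)
          + (deriv (deriv α) s 2 * deriv α s 2 + deriv α s 2 * deriv (deriv α) s 2)) s :=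
      (((hB 0 s).mul (hB 0 s)).add ((hB 1 s).mul (hB 1 s))).add ((hB 2 s).mul (hB 2 s))
    have h0 := const0 _ 1 _ s P2 hD
    linear_combination h0 / 2
  have P5 : ∀ s, α s 0 * deriv (deriv α) s 0 + α s 1 * deriv (deriv α) s 1
      + α s 2 * deriv (deriv α) s 2 = -1 := by
    intro s
    have hD : HasDerivAt (fun t => α t 0 * deriv α t 0 + α t 1 * deriv α t 1
        + α t 2 * deriv α t 2)
        ((deriv α s 0 * deriv α s 0 + α s 0 * deriv (deriv α) s 0)
          + (deriv α s 1 * deriv α s 1 + α s 1 * deriv (deriv α) s 1)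
          + (deriv α s 2 * deriv α s 2 + α s 2 * deriv (deriv α) s 2)) s :=
      (((hA 0 s).mul (hB 0 s)).add ((hA 1 s).mul (hB 1 s))).add ((hA 2 s).mul (hB 2 s))
    have h0 := const0 _ 0 _ s P3 hD
    linear_combination h0 - P2 s
  -- geodesic curvature in coordinates
  have hκc : ∀ s, κg s = deriv (deriv α) s 0 * (α s 1 * deriv α s 2 - α s 2 * deriv α s 1)
      + deriv (deriv α) s 1 * (α s 2 * deriv α s 0 - α s 0 * deriv α s 2)
      + deriv (deriv α) s 2 * (α s 0 * deriv α s 1 - α s 1 * deriv α s 0) := by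
    intro s
    rw [hκg s, hinner, hcross0, hcross1, hcross2]
  -- derivative of constant angle condition
  have hck : ∀ s, (α s 1 * deriv α s 2 - α s 2 * deriv α s 1) * k 0
      + (α s 2 * deriv α s 0 - α s 0 * deriv α s 2) * k 1
      + (α s 0 * deriv α s 1 - α s 1 * deriv α s 0) * k 2 = c := by
    intro s
    rw [← hc s, hinner, hcross0, hcross1, hcross2]
  have H : ∀ s,
      ((deriv α s 1 * deriv α s 2 + α s 1 * deriv (deriv α) s 2)
        - (deriv α s 2 * deriv α s 1 + α s 2 * deriv (deriv α) s 1)) * k 0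
      + ((deriv α s 2 * deriv α s 0 + α s 2 * deriv (deriv α) s 0)
        - (deriv α s 0 * deriv α s 2 + α s 0 * deriv (deriv α) s 2)) * k 1
      + ((deriv α s 0 * deriv α s 1 + α s 0 * deriv (deriv α) s 1)
        - (deriv α s 1 * deriv α s 0 + α s 1 * deriv (deriv α) s 0)) * k 2 = 0 := by
    intro s
    have hD : HasDerivAt (fun t => (α t 1 * deriv α t 2 - α t 2 * deriv α t 1) * k 0
        + (α t 2 * deriv α t 0 - α t 0 * deriv α t 2) * k 1
        + (α t 0 * deriv α t 1 - α t 1 * deriv α t 0) * k 2)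
        (((deriv α s 1 * deriv α s 2 + α s 1 * deriv (deriv α) s 2)
          - (deriv α s 2 * deriv α s 1 + α s 2 * deriv (deriv α) s 1)) * k 0
        + ((deriv α s 2 * deriv α s 0 + α s 2 * deriv (deriv α) s 0)
          - (deriv α s 0 * deriv α s 2 + α s 0 * deriv (deriv α) s 2)) * k 1
        + ((deriv α s 0 * deriv α s 1 + α s 0 * deriv (deriv α) s 1)
          - (deriv α s 1 * deriv α s 0 + α s 1 * deriv (deriv α) s 0)) * k 2) s :=
      (((((hA 1 s).mul (hB 2 s)).sub ((hA 2 s).mul (hB 1 s))).mul_const (k 0)).add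
        ((((hA 2 s).mul (hB 0 s)).sub ((hA 0 s).mul (hB 2 s))).mul_const (k 1))).add
        ((((hA 0 s).mul (hB 1 s)).sub ((hA 1 s).mul (hB 0 s))).mul_const (k 2))
    exact const0 _ c _ s hck hD
  -- Part 1
  have part1 : ∀ s, κg s = 0 ∨ ⟪deriv α s, k⟫ = 0 := by
    intro s
    have key := key_alg (α s 0) (α s 1) (α s 2) (deriv α s 0) (deriv α s 1) (deriv α s 2)
      (deriv (deriv α) s 0) (deriv (deriv α) s 1) (deriv (deriv α) s 2) (k 0) (k 1) (k 2)
      (P1 s) (P2 s) (P3 s) (P4 s) (P5 s)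
    have hk2 : κg s * ⟪deriv α s, k⟫ = 0 := by
      rw [hκc s, hinner]
      linear_combination key - H s
    exact mul_eq_zero.mp hk2
  refine ⟨part1, ?_⟩
  rintro (hκ0 | hne)
  · -- great circle case: κg ≡ 0, the normal α × α' is constant
    have hGconst : ∀ (u : E3) (s : ℝ),
        ⟪cross3 (α s) (deriv α s), u⟫ = ⟪cross3 (α 0) (deriv α 0), u⟫ := by
      intro u
      have hD : ∀ s, HasDerivAt (fun t => (α t 1 * deriv α t 2 - α t 2 * deriv α t 1) * u 0
          + (α t 2 * deriv α t 0 - α t 0 * deriv α t 2) * u 1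
          + (α t 0 * deriv α t 1 - α t 1 * deriv α t 0) * u 2)
          (((deriv α s 1 * deriv α s 2 + α s 1 * deriv (deriv α) s 2)
            - (deriv α s 2 * deriv α s 1 + α s 2 * deriv (deriv α) s 1)) * u 0
          + ((deriv α s 2 * deriv α s 0 + α s 2 * deriv (deriv α) s 0)
            - (deriv α s 0 * deriv α s 2 + α s 0 * deriv (deriv α) s 2)) * u 1
          + ((deriv α s 0 * deriv α s 1 + α s 0 * deriv (deriv α) s 1)
            - (deriv α s 1 * deriv α s 0 + α s 1 * deriv (deriv α) s 0)) * u 2) s := fun s =>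
        (((((hA 1 s).mul (hB 2 s)).sub ((hA 2 s).mul (hB 1 s))).mul_const (u 0)).add
          ((((hA 2 s).mul (hB 0 s)).sub ((hA 0 s).mul (hB 2 s))).mul_const (u 1))).add
          ((((hA 0 s).mul (hB 1 s)).sub ((hA 1 s).mul (hB 0 s))).mul_const (u 2))
      have hz : ∀ s, deriv (fun t => (α t 1 * deriv α t 2 - α t 2 * deriv α t 1) * u 0
          + (α t 2 * deriv α t 0 - α t 0 * deriv α t 2) * u 1
          + (α t 0 * deriv α t 1 - α t 1 * deriv α t 0) * u 2) s = 0 := by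
        intro s
        rw [(hD s).deriv]
        have key := key_alg (α s 0) (α s 1) (α s 2) (deriv α s 0) (deriv α s 1) (deriv α s 2)
          (deriv (deriv α) s 0) (deriv (deriv α) s 1) (deriv (deriv α) s 2) (u 0) (u 1) (u 2)
          (P1 s) (P2 s) (P3 s) (P4 s) (P5 s)
        have hκz := hκ0 s
        rw [hκc s] at hκz
        linear_combination key - (deriv α s 0 * u 0 + deriv α s 1 * u 1 + deriv α s 2 * u 2) * hκz
      intro s
      rw [hinner, hinner, hcross0, hcross1, hcross2, hcross0, hcross1, hcross2]
      exact is_const_of_deriv_eq_zero (fun s => (hD s).differentiableAt) hz s 0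
    refine ⟨cross3 (α 0) (deriv α 0), ?_, ⟪α 0, cross3 (α 0) (deriv α 0)⟫, ?_⟩
    · -- norm 1
      have h1 : ⟪cross3 (α 0) (deriv α 0), cross3 (α 0) (deriv α 0)⟫ = 1 := by
        rw [hinner, hcross0, hcross1, hcross2]
        linear_combination (deriv α 0 0 * deriv α 0 0 + deriv α 0 1 * deriv α 0 1
            + deriv α 0 2 * deriv α 0 2) * P1 0 + P2 0
          - (α 0 0 * deriv α 0 0 + α 0 1 * deriv α 0 1 + α 0 2 * deriv α 0 2) * P3 0
      have h2 := real_inner_self_eq_norm_mul_norm (cross3 (α 0) (deriv α 0))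
      nlinarith [norm_nonneg (cross3 (α 0) (deriv α 0))]
    · -- ⟪α s, w⟫ constant
      intro s
      have hD : ∀ s, HasDerivAt (fun t => α t 0 * cross3 (α 0) (deriv α 0) 0
          + α t 1 * cross3 (α 0) (deriv α 0) 1 + α t 2 * cross3 (α 0) (deriv α 0) 2)
          (deriv α s 0 * cross3 (α 0) (deriv α 0) 0 + deriv α s 1 * cross3 (α 0) (deriv α 0) 1
            + deriv α s 2 * cross3 (α 0) (deriv α 0) 2) s := fun s =>
        (((hA 0 s).mul_const _).add ((hA 1 s).mul_const _)).add ((hA 2 s).mul_const _)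
      have hz : ∀ s, deriv (fun t => α t 0 * cross3 (α 0) (deriv α 0) 0
          + α t 1 * cross3 (α 0) (deriv α 0) 1 + α t 2 * cross3 (α 0) (deriv α 0) 2) s = 0 := by
        intro s
        rw [(hD s).deriv]
        have h3 : ⟪cross3 (α s) (deriv α s), deriv α s⟫ = 0 := by
          rw [hinner, hcross0, hcross1, hcross2]; ring
        have h4 := hGconst (deriv α s) s
        rw [h4] at h3
        rw [hinner, hcross0, hcross1, hcross2] at h3
        rw [hcross0, hcross1, hcross2]
        linear_combination h3
      have hcon := is_const_of_deriv_eq_zero (fun s => (hD s).differentiableAt) hz s 0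
      rw [hinner, hinner]
      exact hcon
  · -- κg never zero: ⟪α', k⟫ ≡ 0, so ⟪α, k⟫ is constant
    have hbk : ∀ s, ⟪deriv α s, k⟫ = 0 := fun s => (part1 s).resolve_left (hne s)
    refine ⟨k, hk, ⟪α 0, k⟫, ?_⟩
    intro s
    have hD : ∀ s, HasDerivAt (fun t => α t 0 * k 0 + α t 1 * k 1 + α t 2 * k 2)
        (deriv α s 0 * k 0 + deriv α s 1 * k 1 + deriv α s 2 * k 2) s := fun s =>
      (((hA 0 s).mul_const _).add ((hA 1 s).mul_const _)).add ((hA 2 s).mul_const _)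
    have hz : ∀ s, deriv (fun t => α t 0 * k 0 + α t 1 * k 1 + α t 2 * k 2) s = 0 := by
      intro s
      rw [(hD s).deriv]
      have h3 := hbk s
      rw [hinner] at h3
      exact h3
    have hcon := is_const_of_deriv_eq_zero (fun s => (hD s).differentiableAt) hz s 0
    rw [hinner, hinner]
    exact hcon
end
end

section
/- Let θ ∈ (0, π/2), λ : I → ℝ smooth, and define the generalized-helix tangent developable r(s,v) = (cos θ(∫ sin λ(s) ds + v sin λ(s)), cos θ(∫ cos λ(s) ds + v cos λ(s)), (s+v) sin θ). Then the third coordinate of the unit normal of this surface is constant, equal to ±cos θ; i.e., the surface is a constant angle surface with angle θ relative to k = (0,0,1). -/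
open scoped RealInnerProductSpace
open Real

noncomputable section

/-- the tangent developable of the generalized helix
`α(s) = (cos θ ∫₀^s sin λ, cos θ ∫₀^s cos λ, s sin θ)` is a constant angle surface:
the third coordinate of its unit normal equals `± cos θ` at every regular point. -/
theorem generalized_helix_tangent_developable_constant_angle
    (θ : ℝ) (hθ : θ ∈ Set.Ioo 0 (π / 2))
    (lam : ℝ → ℝ) (hlam : ContDiff ℝ (⊤ : ℕ∞) lam) (hlam' : ∀ s, deriv lam s ≠ 0)
    (α : ℝ → E3)
    (hα : ∀ s, α s = (EuclideanSpace.equiv (Fin 3) ℝ).symm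
      ![Real.cos θ * ∫ u in (0:ℝ)..s, Real.sin (lam u),
        Real.cos θ * ∫ u in (0:ℝ)..s, Real.cos (lam u),
        s * Real.sin θ])
    (N : ℝ → ℝ → E3)
    (hN : ∀ s v, N s v =
      ‖cross3 (deriv α s + v • deriv (deriv α) s) (deriv α s)‖⁻¹ •
        cross3 (deriv α s + v • deriv (deriv α) s) (deriv α s)) :
    ∀ s v : ℝ, v ≠ 0 → N s v 2 = Real.cos θ ∨ N s v 2 = -Real.cos θ := by
  have hc : 0 < Real.cos θ := Real.cos_pos_of_mem_Ioo ⟨by linarith [hθ.1, Real.pi_pos], hθ.2⟩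
  have hlamc : Continuous lam := hlam.continuous
  have hlamd : ∀ s, HasDerivAt lam (deriv lam s) s :=
    fun s => ((hlam.differentiable (by simp)) s).hasDerivAt
  set E := (EuclideanSpace.equiv (Fin 3) ℝ).symm with hE
  -- first derivative
  have hA : ∀ s, HasDerivAt α
      (E ![Real.cos θ * Real.sin (lam s), Real.cos θ * Real.cos (lam s), Real.sin θ]) s := by
    intro s
    have h0 : HasDerivAt (fun s => Real.cos θ * ∫ u in (0:ℝ)..s, Real.sin (lam u))
        (Real.cos θ * Real.sin (lam s)) s := by
      have hg : Continuous fun u => Real.sin (lam u) := Real.continuous_sin.comp hlamc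
      exact (intervalIntegral.integral_hasDerivAt_right (hg.intervalIntegrable 0 s)
        (hg.stronglyMeasurableAtFilter _ _) hg.continuousAt).const_mul _
    have h1 : HasDerivAt (fun s => Real.cos θ * ∫ u in (0:ℝ)..s, Real.cos (lam u))
        (Real.cos θ * Real.cos (lam s)) s := by
      have hg : Continuous fun u => Real.cos (lam u) := Real.continuous_cos.comp hlamc
      exact (intervalIntegral.integral_hasDerivAt_right (hg.intervalIntegrable 0 s)
        (hg.stronglyMeasurableAtFilter _ _) hg.continuousAt).const_mul _
    have h2 : HasDerivAt (fun s : ℝ => s * Real.sin θ) (Real.sin θ) s := by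
      simpa using (hasDerivAt_id s).mul_const (Real.sin θ)
    have hf : HasDerivAt (fun s => (![Real.cos θ * ∫ u in (0:ℝ)..s, Real.sin (lam u),
        Real.cos θ * ∫ u in (0:ℝ)..s, Real.cos (lam u), s * Real.sin θ] : Fin 3 → ℝ))
        ![Real.cos θ * Real.sin (lam s), Real.cos θ * Real.cos (lam s), Real.sin θ] s := by
      rw [hasDerivAt_pi]
      intro i
      fin_cases i <;> simpa using (by assumption : _)
    have := (E.toContinuousLinearMap.hasFDerivAt).comp_hasDerivAt s hf
    simpa [hα] using (funext hα ▸ this : _)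
  have hda : deriv α = fun s =>
      E ![Real.cos θ * Real.sin (lam s), Real.cos θ * Real.cos (lam s), Real.sin θ] :=
    funext fun s => (hA s).deriv
  -- second derivative
  have hB : ∀ s, deriv (deriv α) s =
      E ![Real.cos θ * (Real.cos (lam s) * deriv lam s),
          Real.cos θ * (-Real.sin (lam s) * deriv lam s), 0] := by
    intro s
    rw [hda]
    have h0 : HasDerivAt (fun s => Real.cos θ * Real.sin (lam s))
        (Real.cos θ * (Real.cos (lam s) * deriv lam s)) s := ((hlamd s).sin).const_mul _
    have h1 : HasDerivAt (fun s => Real.cos θ * Real.cos (lam s))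
        (-(Real.cos θ * (Real.sin (lam s) * deriv lam s))) s := by
      simpa using ((hlamd s).cos).const_mul (Real.cos θ)
    have h2 : HasDerivAt (fun _ : ℝ => Real.sin θ) (0 : ℝ) s := hasDerivAt_const s _
    have hf : HasDerivAt (fun s => (![Real.cos θ * Real.sin (lam s),
        Real.cos θ * Real.cos (lam s), Real.sin θ] : Fin 3 → ℝ))
        ![Real.cos θ * (Real.cos (lam s) * deriv lam s),
          Real.cos θ * (-Real.sin (lam s) * deriv lam s), 0] s := by
      rw [hasDerivAt_pi]
      intro i
      fin_cases i <;> simpa using (by assumption : _)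
    exact ((E.toContinuousLinearMap.hasFDerivAt).comp_hasDerivAt s hf).deriv
  -- main computation
  intro s v hv
  set c := Real.cos θ
  set t := Real.sin θ
  set sl := Real.sin (lam s)
  set cl := Real.cos (lam s)
  set L := deriv lam s
  have h1 : sl ^ 2 + cl ^ 2 = 1 := Real.sin_sq_add_cos_sq (lam s)
  have h2 : t ^ 2 + c ^ 2 = 1 := Real.sin_sq_add_cos_sq θ
  set p : E3 := deriv α s + v • deriv (deriv α) s with hp
  have ha : ∀ i, deriv α s i = (![c * sl, c * cl, t] : Fin 3 → ℝ) i := by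
    intro i; rw [hda]; rfl
  have hb : ∀ i, deriv (deriv α) s i =
      (![c * (cl * L), c * (-sl * L), 0] : Fin 3 → ℝ) i := by
    intro i; rw [hB]; rfl
  have hpi : ∀ i, p i = deriv α s i + v * deriv (deriv α) s i := by
    intro i; simp [hp, PiLp.add_apply, PiLp.smul_apply, smul_eq_mul]
  have hp0 : p 0 = c * sl + v * (c * (cl * L)) := by rw [hpi, ha 0, hb 0]; rfl
  have hp1 : p 1 = c * cl + v * (c * (-sl * L)) := by rw [hpi, ha 1, hb 1]; rfl
  have hp2 : p 2 = t + v * 0 := by rw [hpi, ha 2, hb 2]; rfl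
  have ha0 : deriv α s 0 = c * sl := by rw [ha 0]; rfl
  have ha1 : deriv α s 1 = c * cl := by rw [ha 1]; rfl
  have ha2 : deriv α s 2 = t := by rw [ha 2]; rfl
  set w : E3 := cross3 p (deriv α s) with hw
  have hw0 : w 0 = p 1 * t - p 2 * (c * cl) := by
    simp [hw, cross3, ha1, ha2]
  have hw1 : w 1 = p 2 * (c * sl) - p 0 * t := by
    simp [hw, cross3, ha0, ha2]
  have hw2 : w 2 = p 0 * (c * cl) - p 1 * (c * sl) := by
    simp [hw, cross3, ha0, ha1]
  have hw2' : w 2 = v * L * c ^ 2 := by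
    rw [hw2, hp0, hp1]; linear_combination v * c ^ 2 * L * h1
  have hnorm : ‖w‖ = |v * L| * c := by
    have : ‖w‖ = Real.sqrt (w 0 ^ 2 + w 1 ^ 2 + w 2 ^ 2) := by
      rw [EuclideanSpace.norm_eq]
      simp [Fin.sum_univ_three, Real.norm_eq_abs, sq_abs]
    rw [this]
    have hsum : w 0 ^ 2 + w 1 ^ 2 + w 2 ^ 2 = (v * L * c) ^ 2 := by
      rw [hw0, hw1, hw2', hp0, hp1, hp2]
      linear_combination (v * c * L) ^ 2 * t ^ 2 * h1 + (v * c * L) ^ 2 * h2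
    rw [hsum, Real.sqrt_sq_eq_abs, abs_mul, abs_of_pos hc]
  have hNval : N s v 2 = ‖w‖⁻¹ * w 2 := by
    rw [hN s v]
    simp [← hw, ← hp, PiLp.smul_apply, smul_eq_mul]
  rw [hNval, hnorm, hw2']
  have hr : v * L ≠ 0 := mul_ne_zero hv (hlam' s)
  rcases hr.lt_or_gt with h | h
  · right
    rw [abs_of_neg h]
    field_simp
    simp [show L ≠ 0 from hlam' s]
  · left
    rw [abs_of_pos h]
    field_simp
    simp [show L ≠ 0 from hlam' s]
end
end

section
/- For any η : ℝ → ℝ smooth and θ constant, the surface r(u₁,u₂) = (u₁ cos θ cos u₂ - cos θ ∫₀^{u₂} η(τ) sin τ dτ, u₁ cos θ sin u₂ + cos θ ∫₀^{u₂} η(τ) cos τ dτ, u₁ sin θ) has unit normal making the constant angle θ with k = (0,0,1), at all points where it is regular. -/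
open scoped RealInnerProductSpace
open Real

noncomputable section

/-- the surface of item (i) of Theorem A,
`r(u₁,u₂) = (u₁ cos θ cos u₂ - cos θ ∫₀^{u₂} η sin, u₁ cos θ sin u₂ + cos θ ∫₀^{u₂} η cos, u₁ sin θ)`,
has unit normal making the constant angle `θ` with `k = (0,0,1)` at every regular
point (`u₁ + η(u₂) ≠ 0`), i.e. `⟪N, k⟫ = ± cos θ`. -/
theorem theoremA_surface_is_constant_angle
    (θ : ℝ) (hθ : θ ∈ Set.Ioo 0 (π / 2))
    (η : ℝ → ℝ) (hη : ContDiff ℝ (⊤ : ℕ∞) η)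
    (r : ℝ → ℝ → E3)
    (hr : ∀ u₁ u₂, r u₁ u₂ = (EuclideanSpace.equiv (Fin 3) ℝ).symm
      ![u₁ * Real.cos θ * Real.cos u₂
          - Real.cos θ * ∫ τ in (0:ℝ)..u₂, η τ * Real.sin τ,
        u₁ * Real.cos θ * Real.sin u₂
          + Real.cos θ * ∫ τ in (0:ℝ)..u₂, η τ * Real.cos τ,
        u₁ * Real.sin θ])
    (k : E3) (hk : k = (EuclideanSpace.equiv (Fin 3) ℝ).symm ![0, 0, 1])
    (u₁ u₂ : ℝ) (hreg : u₁ + η u₂ ≠ 0) :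
    ⟪‖cross3 (deriv (fun x => r x u₂) u₁) (deriv (fun y => r u₁ y) u₂)‖⁻¹ •
        cross3 (deriv (fun x => r x u₂) u₁) (deriv (fun y => r u₁ y) u₂), k⟫
      = Real.cos θ ∨
    ⟪‖cross3 (deriv (fun x => r x u₂) u₁) (deriv (fun y => r u₁ y) u₂)‖⁻¹ •
        cross3 (deriv (fun x => r x u₂) u₁) (deriv (fun y => r u₁ y) u₂), k⟫
      = -Real.cos θ := by
  obtain ⟨hθ0, hθ1⟩ := hθ
  have hc : 0 < Real.cos θ := Real.cos_pos_of_mem_Ioo ⟨by linarith [Real.pi_pos], hθ1⟩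
  set c := Real.cos θ with hcdef
  set s := Real.sin θ with hsdef
  -- derivative in u₁
  have h1 : HasDerivAt (fun x => r x u₂)
      ((EuclideanSpace.equiv (Fin 3) ℝ).symm ![c * Real.cos u₂, c * Real.sin u₂, s]) u₁ := by
    have : (fun x => r x u₂) = fun x => (EuclideanSpace.equiv (Fin 3) ℝ).symm
        ![x * c * Real.cos u₂ - c * ∫ τ in (0:ℝ)..u₂, η τ * Real.sin τ,
          x * c * Real.sin u₂ + c * ∫ τ in (0:ℝ)..u₂, η τ * Real.cos τ,
          x * s] := by
      funext x; exact hr x u₂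
    rw [this]
    refine (EuclideanSpace.equiv (Fin 3) ℝ).symm.toContinuousLinearMap.hasFDerivAt.comp_hasDerivAt
      u₁ (hasDerivAt_pi.2 fun i => ?_)
    fin_cases i <;> simp only [Matrix.cons_val_zero, Matrix.cons_val_one, Matrix.head_cons,
      Matrix.cons_val_two, Matrix.tail_cons, Fin.isValue, Fin.zero_eta, Fin.mk_one]
    · simpa [mul_assoc] using ((hasDerivAt_id u₁).mul_const (c * Real.cos u₂)).sub_const (c * ∫ τ in (0:ℝ)..u₂, η τ * Real.sin τ)
    · simpa [mul_assoc] using ((hasDerivAt_id u₁).mul_const (c * Real.sin u₂)).add_const (c * ∫ τ in (0:ℝ)..u₂, η τ * Real.cos τ)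
    · simpa using (hasDerivAt_id u₁).mul_const s
  -- derivative in u₂
  have hcont1 : Continuous fun τ => η τ * Real.sin τ := hη.continuous.mul Real.continuous_sin
  have hcont2 : Continuous fun τ => η τ * Real.cos τ := hη.continuous.mul Real.continuous_cos
  have hI1 : HasDerivAt (fun y => ∫ τ in (0:ℝ)..y, η τ * Real.sin τ) (η u₂ * Real.sin u₂) u₂ :=
    intervalIntegral.integral_hasDerivAt_right (hcont1.intervalIntegrable _ _)
      hcont1.aestronglyMeasurable.stronglyMeasurableAtFilter hcont1.continuousAt
  have hI2 : HasDerivAt (fun y => ∫ τ in (0:ℝ)..y, η τ * Real.cos τ) (η u₂ * Real.cos u₂) u₂ :=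
    intervalIntegral.integral_hasDerivAt_right (hcont2.intervalIntegrable _ _)
      hcont2.aestronglyMeasurable.stronglyMeasurableAtFilter hcont2.continuousAt
  have h2 : HasDerivAt (fun y => r u₁ y)
      ((EuclideanSpace.equiv (Fin 3) ℝ).symm
        ![-(c * (u₁ + η u₂) * Real.sin u₂), c * (u₁ + η u₂) * Real.cos u₂, 0]) u₂ := by
    have : (fun y => r u₁ y) = fun y => (EuclideanSpace.equiv (Fin 3) ℝ).symm
        ![u₁ * c * Real.cos y - c * ∫ τ in (0:ℝ)..y, η τ * Real.sin τ,
          u₁ * c * Real.sin y + c * ∫ τ in (0:ℝ)..y, η τ * Real.cos τ,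
          u₁ * s] := by
      funext y; exact hr u₁ y
    rw [this]
    refine (EuclideanSpace.equiv (Fin 3) ℝ).symm.toContinuousLinearMap.hasFDerivAt.comp_hasDerivAt
      u₂ (hasDerivAt_pi.2 fun i => ?_)
    fin_cases i <;> simp only [Matrix.cons_val_zero, Matrix.cons_val_one, Matrix.head_cons,
      Matrix.cons_val_two, Matrix.tail_cons, Fin.isValue, Fin.zero_eta, Fin.mk_one]
    · have := ((Real.hasDerivAt_cos u₂).const_mul (u₁ * c)).sub (hI1.const_mul c)
      convert this using 1
      · rfl
      · ring
    · have := ((Real.hasDerivAt_sin u₂).const_mul (u₁ * c)).add (hI2.const_mul c)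
      convert this using 1
      · rfl
      · ring
    · exact hasDerivAt_const _ _
  rw [h1.deriv, h2.deriv, hk]
  set X := u₁ + η u₂ with hX
  have hcross : cross3
      ((EuclideanSpace.equiv (Fin 3) ℝ).symm ![c * Real.cos u₂, c * Real.sin u₂, s])
      ((EuclideanSpace.equiv (Fin 3) ℝ).symm
        ![-(c * X * Real.sin u₂), c * X * Real.cos u₂, 0]) =
      (EuclideanSpace.equiv (Fin 3) ℝ).symm
        ![-(s * c * X * Real.cos u₂), -(s * c * X * Real.sin u₂), c ^ 2 * X] := by
    have happ : ∀ (v : Fin 3 → ℝ) (i : Fin 3),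
        ((EuclideanSpace.equiv (Fin 3) ℝ).symm v) i = v i := fun _ _ => rfl
    unfold cross3
    congr 1
    have hsc : Real.sin u₂ ^ 2 + Real.cos u₂ ^ 2 = 1 := Real.sin_sq_add_cos_sq u₂
    funext i
    fin_cases i <;> simp [happ]
    · ring
    · ring
    · linear_combination (c ^ 2 * X) * hsc
  rw [hcross]
  have hnorm : ‖((EuclideanSpace.equiv (Fin 3) ℝ).symm
      ![-(s * c * X * Real.cos u₂), -(s * c * X * Real.sin u₂), c ^ 2 * X] : E3)‖
      = c * |X| := by
    rw [EuclideanSpace.norm_eq]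
    have h1 : (Real.sqrt (c ^ 2 * X ^ 2)) = c * |X| := by
      rw [show c ^ 2 * X ^ 2 = (c * |X|) ^ 2 by rw [mul_pow, sq_abs],
        Real.sqrt_sq (by positivity)]
    rw [← h1]
    congr 1
    have happ : ∀ (v : Fin 3 → ℝ) (i : Fin 3),
        ((EuclideanSpace.equiv (Fin 3) ℝ).symm v) i = v i := fun _ _ => rfl
    have hsc : Real.sin u₂ ^ 2 + Real.cos u₂ ^ 2 = 1 := Real.sin_sq_add_cos_sq u₂
    have hsc2 : s ^ 2 + c ^ 2 = 1 := Real.sin_sq_add_cos_sq θ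
    simp [Fin.sum_univ_three, happ, Real.norm_eq_abs, sq_abs]
    linear_combination (s ^ 2 * c ^ 2 * X ^ 2) * hsc + (c ^ 2 * X ^ 2) * hsc2
  rw [hnorm]
  have hinner : ⟪(c * |X|)⁻¹ • ((EuclideanSpace.equiv (Fin 3) ℝ).symm
      ![-(s * c * X * Real.cos u₂), -(s * c * X * Real.sin u₂), c ^ 2 * X] : E3),
      ((EuclideanSpace.equiv (Fin 3) ℝ).symm ![0, 0, 1] : E3)⟫
      = (c * |X|)⁻¹ * (c ^ 2 * X) := by
    have happ : ∀ (v : Fin 3 → ℝ) (i : Fin 3),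
        ((EuclideanSpace.equiv (Fin 3) ℝ).symm v) i = v i := fun _ _ => rfl
    rw [real_inner_smul_left]
    congr 1
    simp [PiLp.inner_apply, Fin.sum_univ_three, happ]
  rw [hinner]
  have hXne : |X| ≠ 0 := abs_ne_zero.2 hreg
  rcases abs_choice X with h | h
  · left
    rw [h]
    field_simp
  · right
    rw [h]
    have : X ≠ 0 := hreg
    field_simp
end
end
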